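/- Let (Λ, d) be a row-finite, source-free k-graph, and v ∈ Λ⁰ a vertex such that both Λ¹v (edges into v) and vΛ¹ (edges out of v) are complete edges, and v ≠ w := r(Λ¹v). Fix f ∈ Λ¹v. Then the reduced graph Λ_R = G_R*/∼_R — where G_R deletes v and the edges Λ¹v, redirects edges with range v to w, and μ ∼_R λ iff par(μ) ∼ par(λ) with par inserting f after every edge that formerly had range v — is a row-finite, source-free k-graph. -/

import Mathlib

open scoped Classical

/-- A `k`-colored directed graph: vertices, edges, range, source, and a color
(degree) in `Fin k` for each edge. -/
structure ColoredGraph (k : ℕ) where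
  V : Type
  E : Type
  src : E → V
  rng : E → V
  color : E → Fin k

namespace ColoredGraph

variable {k : ℕ}

/-- A list of edges (listed from the source end) is composable starting at `v`. -/
def Composable (G : ColoredGraph k) : G.V → List G.E → Prop
  | _, [] => True
  | v, e :: l => G.src e = v ∧ Composable G (G.rng e) l

/-- The final vertex reached by following a list of edges starting at `v`. -/
def endV (G : ColoredGraph k) : G.V → List G.E → G.V
  | v, [] => v
  | _, e :: l => endV G (G.rng e) l

/-- A finite path in `G` : an element of the path category `G*`.  The edges are
listed starting from the source (so the first edge of the list is the first,
innermost, edge of the path). -/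
structure GPath (G : ColoredGraph k) where
  src : G.V
  edges : List G.E
  comp : G.Composable src edges

namespace GPath

variable {G : ColoredGraph k}

/-- The range of a path. -/
def rng (p : GPath G) : G.V := G.endV p.src p.edges

/-- The color order of a path: the list of colors of its edges, starting from
the source end. -/
def colors (p : GPath G) : List (Fin k) := p.edges.map G.color

/-- The degree of a path, as an element of `ℕ^k`. -/
def deg (p : GPath G) : Fin k → ℕ := fun i => p.colors.count i

end GPath

theorem composable_append {G : ColoredGraph k} :
    ∀ (l₁ : List G.E) (v : G.V) (l₂ : List G.E),
      G.Composable v l₁ → G.Composable (G.endV v l₁) l₂ → G.Composable v (l₁ ++ l₂) := by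
  intro l₁
  induction l₁ with
  | nil => intro v l₂ _ h₂; exact h₂
  | cons e l ih => intro v l₂ h₁ h₂; exact ⟨h₁.1, ih (G.rng e) l₂ h₁.2 h₂⟩

theorem endV_append {G : ColoredGraph k} :
    ∀ (l₁ : List G.E) (v : G.V) (l₂ : List G.E),
      G.endV v (l₁ ++ l₂) = G.endV (G.endV v l₁) l₂ := by
  intro l₁
  induction l₁ with
  | nil => intro v l₂; rfl
  | cons e l ih => intro v l₂; exact ih (G.rng e) l₂

/-- Concatenation of composable paths. -/
def GPath.append {G : ColoredGraph k} (p q : GPath G) (h : p.rng = q.src) : GPath G :=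
  ⟨p.src, p.edges ++ q.edges,
    composable_append p.edges p.src q.edges p.comp
      (by rw [show G.endV p.src p.edges = q.src from h]; exact q.comp)⟩

/-- The path consisting of a single edge. -/
def edgePath (G : ColoredGraph k) (e : G.E) : GPath G :=
  ⟨G.src e, [e], by exact ⟨rfl, True.intro⟩⟩

/-- The relation preserves range, source and degree. -/
def PreservesRSD (G : ColoredGraph k) (rel : GPath G → GPath G → Prop) : Prop :=
  ∀ p q : GPath G, rel p q → p.src = q.src ∧ p.rng = q.rng ∧ p.deg = q.deg

/-- (KG0): the relation respects concatenation of paths. -/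
def KG0 (G : ColoredGraph k) (rel : GPath G → GPath G → Prop) : Prop :=
  ∀ (p₁ p₂ q₁ q₂ : GPath G) (h : p₁.rng = p₂.src) (h' : q₁.rng = q₂.src),
    rel p₁ q₁ → rel p₂ q₂ → rel (p₁.append p₂ h) (q₁.append q₂ h')

/-- (KG4): for each path and each permutation of its color order there is a
unique equivalent path with the permuted color order. -/
def KG4 (G : ColoredGraph k) (rel : GPath G → GPath G → Prop) : Prop :=
  ∀ (p : GPath G) (c : List (Fin k)), List.Perm c p.colors →
    ∃! q : GPath G, rel q p ∧ q.colors = c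

/-- (KG1): distinct edges are inequivalent. -/
def KG1 (G : ColoredGraph k) (rel : GPath G → GPath G → Prop) : Prop :=
  ∀ e f : G.E, rel (edgePath G e) (edgePath G f) ↔ e = f

/-- (KG2): completeness for bi-colored paths. -/
def KG2 (G : ColoredGraph k) (rel : GPath G → GPath G → Prop) : Prop :=
  ∀ (p : GPath G) (i j : Fin k), p.colors = [i, j] →
    ∃! q : GPath G, rel p q ∧ q.colors = [j, i]

/-- An equivalence relation, together with `KG0` and `KG4`, presents a `k`-graph. -/
def IsKGraphRel (G : ColoredGraph k) (rel : GPath G → GPath G → Prop) : Prop :=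
  Equivalence rel ∧ PreservesRSD G rel ∧ KG0 G rel ∧ KG4 G rel

/-- Every vertex receives an edge of every color. -/
def SourceFree (G : ColoredGraph k) : Prop :=
  ∀ (v : G.V) (i : Fin k), ∃ e : G.E, G.rng e = v ∧ G.color e = i

/-- Every vertex receives finitely many edges of each color. -/
def RowFinite (G : ColoredGraph k) : Prop :=
  ∀ (v : G.V) (i : Fin k), Set.Finite {e : G.E | G.rng e = v ∧ G.color e = i}

/-- `q` is obtained from `p` by replacing the initial (inner) two-edge subpath by
an equivalent two-edge path with transposed colors. -/
def SwapInner (G : ColoredGraph k) (rel : GPath G → GPath G → Prop) (p q : GPath G) : Prop :=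
  ∃ (a b w : GPath G) (ha : a.rng = w.src) (hb : b.rng = w.src),
    a.edges.length = 2 ∧ b.colors = a.colors.reverse ∧ rel a b ∧
    p = a.append w ha ∧ q = b.append w hb

/-- `q` is obtained from `p` by replacing the final (outer) two-edge subpath by
an equivalent two-edge path with transposed colors. -/
def SwapOuter (G : ColoredGraph k) (rel : GPath G → GPath G → Prop) (p q : GPath G) : Prop :=
  ∃ (w a b : GPath G) (ha : w.rng = a.src) (hb : w.rng = b.src),
    a.edges.length = 2 ∧ b.colors = a.colors.reverse ∧ rel a b ∧
    p = w.append a ha ∧ q = w.append b hb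

/-- (KG3): associativity. For a tri-colored path with pairwise distinct colors,
the two standard routes of successive pairwise swaps give the same result. -/
def KG3 (G : ColoredGraph k) (rel : GPath G → GPath G → Prop) : Prop :=
  ∀ (p : GPath G) (i j l : Fin k), i ≠ j → j ≠ l → i ≠ l →
    p.colors = [l, j, i] → ∀ p₁ p₂ p₃ q₁ q₂ q₃ : GPath G,
      SwapOuter G rel p p₁ → SwapInner G rel p₁ p₂ → SwapOuter G rel p₂ p₃ →
      SwapInner G rel p q₁ → SwapOuter G rel q₁ q₂ → SwapInner G rel q₂ q₃ → p₃ = q₃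

/-- `w ≤ v` : there is a path from `v` to `w` (source `v`, range `w`). -/
def LeV (G : ColoredGraph k) (v w : G.V) : Prop :=
  ∃ p : GPath G, p.src = v ∧ p.rng = w

theorem LeV_extend {G : ColoredGraph k} {v : G.V} (e : G.E)
    (h : LeV G v (G.src e)) : LeV G v (G.rng e) := by
  obtain ⟨p, hs, hr⟩ := h
  refine ⟨p.append (edgePath G e) hr, hs, ?_⟩
  show G.endV p.src (p.edges ++ [e]) = G.rng e
  exact (endV_append p.edges p.src [e]).trans rfl

/-- A complete edge from `u` to `w`: exactly one edge of each color, all with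
source `u` and range `w`, closed under commuting squares. -/
def IsCompleteEdge (G : ColoredGraph k) (rel : GPath G → GPath G → Prop)
    (E : Set G.E) (u w : G.V) : Prop :=
  (∀ i : Fin k, ∃! e : G.E, e ∈ E ∧ G.color e = i) ∧
  (∀ e ∈ E, G.src e = u ∧ G.rng e = w) ∧
  (∀ e ∈ E, ∀ a b f' : G.E, ∀ p q : GPath G,
    ((p.edges = [a, e] ∧ q.edges = [b, f']) ∨ (p.edges = [e, a] ∧ q.edges = [f', b])) →
    rel p q → f' ∈ E)

/-- A set `T` of edges of the color of `f` is closed under being opposite to a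
member in a commuting square whose other color differs from that of `f`. -/
def SqClosed (G : ColoredGraph k) (rel : GPath G → GPath G → Prop)
    (f : G.E) (T : Set G.E) : Prop :=
  ∀ g ∈ T, ∀ (e a b : G.E) (p q : GPath G),
    G.color a = G.color b → G.color a ≠ G.color f → G.color e = G.color f →
    ((p.edges = [g, a] ∧ q.edges = [b, e]) ∨ (p.edges = [a, g] ∧ q.edges = [e, b])) →
    rel p q → e ∈ T

/-- Vertices of the reduced graph: the old vertices other than `v`. -/
abbrev RV (G : ColoredGraph k) (v : G.V) := {x : G.V // x ≠ v}

/-- Edges of the reduced graph: the old edges whose source is not `v`. -/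
abbrev RE (G : ColoredGraph k) (v : G.V) := {e : G.E // G.src e ≠ v}

/-- The reduced colored graph: `v` and the edges with source `v` are deleted,
and edges with range `v` are redirected to `w`. -/
noncomputable def ReduceGraph (G : ColoredGraph k) (v w : G.V) (hwv : w ≠ v) :
    ColoredGraph k where
  V := RV G v
  E := RE G v
  src := fun e => ⟨G.src e.1, e.2⟩
  rng := fun e => if h : G.rng e.1 = v then ⟨w, hwv⟩ else ⟨G.rng e.1, h⟩
  color := fun e => G.color e.1

/-- The parent of a list of edges of the reduced graph: the fixed edge
`f ∈ Λ¹v` is inserted after every edge that formerly had range `v`. -/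
noncomputable def parList (G : ColoredGraph k) (v : G.V) (f : G.E) :
    List (RE G v) → List G.E
  | [] => []
  | e :: l => (if G.rng e.1 = v then [e.1, f] else [e.1]) ++ parList G v f l

/-- The equivalence relation on paths of the reduced graph: paths are related
iff their parents are related in the original graph. -/
noncomputable def ReduceRel (G : ColoredGraph k) (rel : GPath G → GPath G → Prop)
    (v w : G.V) (hwv : w ≠ v) (f : G.E)
    (p q : GPath (ReduceGraph G v w hwv)) : Prop :=
  ∃ p' q' : GPath G,
    p'.src = p.src.1 ∧ p'.edges = parList G v f p.edges ∧
    q'.src = q.src.1 ∧ q'.edges = parList G v f q.edges ∧ rel p' q'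

/-!
Write `par` for the parent map. Since `ReduceRel` is the pullback of `rel` along the injective,
concatenation-preserving map `par`, everything comes down to comparing color orders. The key
invariant is that related paths of `Λ` leave `v` at the same positions: related paths are joined
by a chain of adjacent color swaps, each a commuting square, and `Λ¹v` is closed under commuting
squares. Hence the colors of `par λ` are those of `λ` with the color of `f` inserted at positions
shared by every path related to `par λ`. This gives preservation of degree, and (KG4) for `Λ_R`:
the path of `Λ` with the permuted, augmented color order leaves `v` only along edges of the color
of `f`, which are `f` itself because `vΛ¹` is a complete edge, so it is again a parent.
-/

section Lists

variable {α : Type*}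

def insertMarked (a : α) : List Bool → List α → List α
  | [], _ => []
  | true :: bs, cs => a :: insertMarked a bs cs
  | false :: _, [] => []
  | false :: bs, c :: cs => c :: insertMarked a bs cs

theorem insertMarked_perm (a : α) :
    ∀ (bs : List Bool) (cs : List α), cs.length = bs.count false →
      (insertMarked a bs cs).Perm (List.replicate (bs.count true) a ++ cs)
  | [], cs, h => by simp_all [insertMarked]
  | true :: bs, cs, h => by
    simpa [insertMarked, List.replicate_succ] using
      (insertMarked_perm a bs cs (by simpa using h)).cons a
  | false :: bs, [], h => by simp at h
  | false :: bs, c :: cs, h =>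
    ((insertMarked_perm a bs cs (by simpa using h)).cons c).trans
      (by simpa using List.perm_middle.symm)

theorem insertMarked_injective (a : α) :
    ∀ {bs : List Bool} {cs ds : List α}, cs.length = bs.count false →
      ds.length = bs.count false → insertMarked a bs cs = insertMarked a bs ds → cs = ds
  | [], [], [], _, _, _ => rfl
  | true :: bs, cs, ds, hc, hd, h => by
    simp only [insertMarked, List.cons.injEq, true_and] at h
    exact insertMarked_injective a (by simpa using hc) (by simpa using hd) h
  | false :: bs, c :: cs, d :: ds, hc, hd, h => by
    simp only [insertMarked, List.cons.injEq] at h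
    rw [h.1, insertMarked_injective a (by simpa using hc) (by simpa using hd) h.2]
  | [], _ :: _, _, hc, _, _ | [], _, _ :: _, _, hd, _
  | false :: _, [], _, hc, _, _ | false :: _, _, [], _, hd, _ => by simp_all

theorem eq_of_map_eq_insertMarked {β : Type*} (g : β → α) (m : β → Bool) (a : α) :
    ∀ (l : List β) (cs : List α), l.map g = insertMarked a (l.map m) cs →
      ∀ x ∈ l, m x = true → g x = a
  | [], _, _, x, hx, _ => absurd hx List.not_mem_nil
  | y :: l, cs, h, x, hx, hmx => by
    obtain rfl | hx := List.mem_cons.mp hx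
    · simp only [List.map_cons, hmx, insertMarked, List.cons.injEq] at h
      exact h.1
    · cases hmy : m y <;> cases cs <;>
        simp only [List.map_cons, hmy, insertMarked, List.cons.injEq, reduceCtorEq] at h <;>
        exact eq_of_map_eq_insertMarked g m a l _ h.2 x hx hmx

theorem perm_of_insertMarked_perm (a : α) {bs : List Bool} {cs ds : List α}
    (hc : cs.length = bs.count false) (hd : ds.length = bs.count false)
    (h : (insertMarked a bs cs).Perm (insertMarked a bs ds)) : cs.Perm ds :=
  (List.perm_append_left_iff _).1
    (((insertMarked_perm a bs cs hc).symm.trans h).trans (insertMarked_perm a bs ds hd))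

def AdjSwap (l m : List α) : Prop :=
  ∃ c₁ i j c₂, l = c₁ ++ i :: j :: c₂ ∧ m = c₁ ++ j :: i :: c₂

theorem reflTransGen_adjSwap_of_perm {l m : List α} (h : l.Perm m) :
    Relation.ReflTransGen AdjSwap l m := by
  induction h with
  | nil => exact .refl
  | cons x _ ih =>
    refine Relation.ReflTransGen.lift (x :: ·) ?_ _ _ ih
    rintro a b ⟨c₁, i, j, c₂, rfl, rfl⟩
    exact ⟨x :: c₁, i, j, c₂, rfl, rfl⟩
  | swap x y l => exact .single ⟨[], y, x, l, rfl, rfl⟩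
  | trans _ _ ih₁ ih₂ => exact ih₁.trans ih₂

end Lists

section Paths

variable {G : ColoredGraph k}

theorem GPath.ext {p q : GPath G} (hs : p.src = q.src) (he : p.edges = q.edges) : p = q := by
  cases p; cases q; cases hs; cases he; rfl

theorem composable_append_iff {x : G.V} {l₁ l₂ : List G.E} :
    G.Composable x (l₁ ++ l₂) ↔
      G.Composable x l₁ ∧ G.Composable (G.endV x l₁) l₂ := by
  refine ⟨fun h => ?_, fun h => composable_append l₁ x l₂ h.1 h.2⟩
  induction l₁ generalizing x with
  | nil => exact ⟨trivial, h⟩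
  | cons e l ih => exact ⟨⟨h.1, (ih h.2).1⟩, (ih h.2).2⟩

noncomputable def GPath.visits (v : G.V) (p : GPath G) : List Bool :=
  p.edges.map fun e => decide (G.src e = v)

def IsSquareClosed (rel : GPath G → GPath G → Prop) (E : Set G.E) : Prop :=
  ∀ e ∈ E, ∀ a b f' : G.E, ∀ p q : GPath G,
    ((p.edges = [a, e] ∧ q.edges = [b, f']) ∨ (p.edges = [e, a] ∧ q.edges = [f', b])) →
    rel p q → f' ∈ E

variable {rel : GPath G → GPath G → Prop}

theorem IsCompleteEdge.isSquareClosed {E : Set G.E} {u w : G.V}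
    (h : IsCompleteEdge G rel E u w) : IsSquareClosed rel E :=
  h.2.2

namespace IsKGraphRel

theorem eq_of_rel_of_colors_eq (hK : IsKGraphRel G rel) {a b : GPath G} (hab : rel a b)
    (hc : a.colors = b.colors) : a = b := by
  obtain ⟨_, _, huniq⟩ := hK.2.2.2 b b.colors (List.Perm.refl _)
  exact (huniq a ⟨hab, hc⟩).trans (huniq b ⟨hK.1.refl b, rfl⟩).symm

theorem colors_perm (hK : IsKGraphRel G rel) {a b : GPath G} (hab : rel a b) :
    a.colors.Perm b.colors :=
  List.perm_iff_count.mpr fun i => congrFun (hK.2.1 a b hab).2.2 i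

theorem exists_rel_replace (hK : IsKGraphRel G rel) (a s t : GPath G) {x y : List G.E}
    (ha : a.edges = x ++ s.edges ++ y) (hx : G.endV a.src x = s.src) (hst : rel s t) :
    ∃ a' : GPath G, rel a a' ∧ a'.src = a.src ∧ a'.edges = x ++ t.edges ++ y := by
  obtain ⟨hxs, hy⟩ := composable_append_iff.1 (ha ▸ a.comp)
  rw [endV_append, hx] at hy
  let px : GPath G := ⟨a.src, x, (composable_append_iff.1 hxs).1⟩
  let py : GPath G := ⟨s.rng, y, hy⟩
  obtain ⟨hts, htr, -⟩ := hK.2.1 s t hst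
  have hpx : px.rng = s.src := hx
  have hsp : s.rng = py.src := rfl
  have htp : t.rng = py.src := htr.symm
  have ha' : a = px.append (s.append py hsp) hpx :=
    GPath.ext rfl (by simp [GPath.append, ha, px, py])
  refine ⟨px.append (t.append py htp) (hpx.trans hts), ?_, rfl, by simp [GPath.append, px, py]⟩
  have h := hK.2.2.1 px (s.append py hsp) px (t.append py htp) hpx (hpx.trans hts)
    (hK.1.refl px) (hK.2.2.1 _ _ _ _ hsp htp hst (hK.1.refl py))
  rwa [← ha'] at h

theorem exists_rel_swap (hK : IsKGraphRel G rel) {v : G.V}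
    (hsq : IsSquareClosed rel {e : G.E | G.rng e = v}) (a : GPath G)
    {c₁ c₂ : List (Fin k)} {i j : Fin k} (h : a.colors = c₁ ++ i :: j :: c₂) :
    ∃ a' : GPath G,
      rel a a' ∧ a'.colors = c₁ ++ j :: i :: c₂ ∧ a'.visits v = a.visits v := by
  obtain ⟨x, _, hax, hx, hrest⟩ := List.map_eq_append_iff.1 h
  obtain ⟨s₁, _, rfl, hs₁, hrest⟩ := List.map_eq_cons_iff.1 hrest
  obtain ⟨s₂, y, rfl, hs₂, hy⟩ := List.map_eq_cons_iff.1 hrest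
  obtain ⟨-, hcs₁, hcs₂, -⟩ := composable_append_iff.1 (hax ▸ a.comp)
  let s : GPath G := ⟨G.endV a.src x, [s₁, s₂], hcs₁, hcs₂, trivial⟩
  obtain ⟨t, ⟨hts, htc⟩, -⟩ :=
    hK.2.2.2 s [j, i] (by simp [GPath.colors, s, hs₁, hs₂, List.Perm.swap])
  obtain ⟨t₁, _, hte, ht₁, htc⟩ := List.map_eq_cons_iff.1 htc
  obtain ⟨t₂, _, rfl, ht₂, htc⟩ := List.map_eq_cons_iff.1 htc
  obtain rfl := List.map_eq_nil_iff.1 htc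
  have hst : rel s t := hK.1.symm hts
  obtain ⟨a', hrel, -, ha'⟩ := hK.exists_rel_replace a s t (y := y) (by simp [hax, s]) rfl hst
  refine ⟨a', hrel, by simp [GPath.colors, ha', hte, hx, hy, ht₁, ht₂], ?_⟩
  have htcomp := t.comp
  rw [hte] at htcomp
  obtain ⟨hct₁, hct₂, -⟩ := htcomp
  have hsrc : G.src t₁ = G.src s₁ := hct₁.trans ((hK.2.1 s t hst).1.symm.trans hcs₁.symm)
  have hmid : G.rng t₁ = v ↔ G.rng s₁ = v :=
    ⟨fun h => hsq t₁ h t₂ s₂ s₁ t s (.inr ⟨hte, rfl⟩) hts,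
      fun h => hsq s₁ h s₂ t₂ t₁ s t (.inr ⟨rfl, hte⟩) hst⟩
  simp [GPath.visits, ha', hax, hte, hsrc, hct₂, hcs₂, hmid]

theorem visits_eq_of_rel (hK : IsKGraphRel G rel) {v : G.V}
    (hsq : IsSquareClosed rel {e : G.E | G.rng e = v}) {a b : GPath G} (hab : rel a b) :
    a.visits v = b.visits v := by
  suffices ∀ l, Relation.ReflTransGen AdjSwap l b.colors →
      ∀ a' : GPath G, a'.colors = l → rel a' b → a'.visits v = b.visits v from
    this a.colors (reflTransGen_adjSwap_of_perm (hK.colors_perm hab)) a rfl hab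
  intro l hl
  induction hl using Relation.ReflTransGen.head_induction_on with
  | refl => exact fun a' hc hab' => by rw [hK.eq_of_rel_of_colors_eq hab' hc]
  | head step _ ih =>
    intro a' hc hab'
    obtain ⟨c₁, i, j, c₂, rfl, rfl⟩ := step
    obtain ⟨a'', hrel, hc', hvis⟩ := hK.exists_rel_swap hsq a' hc
    exact hvis.symm.trans (ih a'' hc' (hK.1.trans (hK.1.symm hrel) hab'))

end IsKGraphRel

end Paths

section Reduction

variable {G : ColoredGraph k} {v w : G.V} {hwv : w ≠ v} {f : G.E}

theorem reduceGraph_rng_val (e : RE G v) :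
    ((ReduceGraph G v w hwv).rng e).1 = if G.rng e.1 = v then w else G.rng e.1 := by
  simp only [ReduceGraph]
  split_ifs <;> rfl

theorem endV_parList (hfr : G.rng f = w) :
    ∀ (l : List (RE G v)) (x : RV G v),
      G.endV x.1 (parList G v f l) = ((ReduceGraph G v w hwv).endV x l).1
  | [], _ => rfl
  | e :: l, x => by
    refine Eq.trans ?_ (endV_parList hfr l _)
    rw [reduceGraph_rng_val]
    simp only [parList]
    split_ifs
    · rw [← hfr]
      rfl
    · rfl

theorem composable_parList_iff (hf : G.src f = v) (hfr : G.rng f = w) :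
    ∀ (l : List (RE G v)) (x : RV G v),
      G.Composable x.1 (parList G v f l) ↔ (ReduceGraph G v w hwv).Composable x l
  | [], _ => Iff.rfl
  | e :: l, x => by
    have ih := composable_parList_iff hf hfr l ((ReduceGraph G v w hwv).rng e)
    have hsrc : (ReduceGraph G v w hwv).src e = x ↔ G.src e.1 = x.1 := Subtype.ext_iff
    rw [reduceGraph_rng_val] at ih
    simp only [parList]
    split_ifs at ih ⊢ with hr
    · change G.src e.1 = x.1 ∧ G.src f = G.rng e.1 ∧
          G.Composable (G.rng f) (parList G v f l) ↔
        (ReduceGraph G v w hwv).src e = x ∧ _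
      rw [hsrc, ← ih, hf, hr, hfr, eq_self, true_and]
    · change G.src e.1 = x.1 ∧ G.Composable (G.rng e.1) (parList G v f l) ↔
        (ReduceGraph G v w hwv).src e = x ∧ _
      rw [hsrc, ← ih]

/-- The parent map `par : G_R* → G*` on paths. -/
noncomputable def parPath (hf : G.src f = v) (hfr : G.rng f = w)
    (p : GPath (ReduceGraph G v w hwv)) : GPath G :=
  ⟨p.src.1, parList G v f p.edges, (composable_parList_iff hf hfr p.edges p.src).2 p.comp⟩

theorem parPath_rng (hf : G.src f = v) (hfr : G.rng f = w)
    (p : GPath (ReduceGraph G v w hwv)) : (parPath hf hfr p).rng = p.rng.1 :=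
  endV_parList hfr p.edges p.src

theorem parList_append (l₁ l₂ : List (RE G v)) :
    parList G v f (l₁ ++ l₂) = parList G v f l₁ ++ parList G v f l₂ := by
  induction l₁ with
  | nil => rfl
  | cons e l ih => simp only [List.cons_append, parList, ih, List.append_assoc]

theorem parPath_append (hf : G.src f = v) (hfr : G.rng f = w)
    (p q : GPath (ReduceGraph G v w hwv)) (h : p.rng = q.src) :
    parPath hf hfr (p.append q h) = (parPath hf hfr p).append (parPath hf hfr q)
      ((parPath_rng hf hfr p).trans (congrArg Subtype.val h)) :=
  GPath.ext rfl (parList_append p.edges q.edges)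

theorem parList_injective : Function.Injective (parList G v f) := by
  intro l₁ l₂ h
  induction l₁ generalizing l₂ with
  | nil =>
    cases l₂ with
    | nil => rfl
    | cons e l =>
      simp only [parList] at h
      split_ifs at h <;> simp at h
  | cons e l ih =>
    cases l₂ with
    | nil =>
      simp only [parList] at h
      split_ifs at h <;> simp at h
    | cons e' l' =>
      simp only [parList] at h
      obtain rfl : e = e' := Subtype.ext (by split_ifs at h <;> simpa using congrArg List.head? h)
      rw [ih (List.append_cancel_left h)]

theorem parPath_injective (hf : G.src f = v) (hfr : G.rng f = w) :
    Function.Injective (parPath (hwv := hwv) hf hfr) :=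
  fun _ _ h => GPath.ext (Subtype.ext (congrArg GPath.src h))
    (parList_injective (congrArg GPath.edges h))

theorem map_color_parList (hf : G.src f = v) (l : List (RE G v)) :
    (parList G v f l).map G.color = insertMarked (G.color f)
      ((parList G v f l).map fun e => decide (G.src e = v)) (l.map fun e => G.color e.1) := by
  induction l with
  | nil => rfl
  | cons e l ih =>
    by_cases hr : G.rng e.1 = v <;>
      simp only [parList, hr, if_true, if_false, List.cons_append, List.nil_append, List.map_cons,
        decide_eq_false e.2, decide_eq_true hf, insertMarked, ih]

theorem count_false_map_parList (hf : G.src f = v) (l : List (RE G v)) :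
    ((parList G v f l).map fun e => decide (G.src e = v)).count false = l.length := by
  induction l with
  | nil => rfl
  | cons e l ih =>
    by_cases hr : G.rng e.1 = v <;>
      simp [parList, hr, ih, decide_eq_false e.2, decide_eq_true hf]

theorem parPath_colors (hf : G.src f = v) (hfr : G.rng f = w)
    (p : GPath (ReduceGraph G v w hwv)) :
    (parPath hf hfr p).colors = insertMarked (G.color f) ((parPath hf hfr p).visits v) p.colors :=
  map_color_parList hf p.edges

theorem count_false_visits_parPath (hf : G.src f = v) (hfr : G.rng f = w)
    (p : GPath (ReduceGraph G v w hwv)) :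
    ((parPath hf hfr p).visits v).count false = p.colors.length :=
  (count_false_map_parList hf p.edges).trans (List.length_map _).symm

theorem exists_parList_eq (hwv : w ≠ v) (hf : G.src f = v) (hfr : G.rng f = w) :
    ∀ (l : List G.E) (x : G.V), x ≠ v → G.Composable x l → G.endV x l ≠ v →
      (∀ e ∈ l, G.src e = v → e = f) → ∃ l' : List (RE G v), parList G v f l' = l
  | [], _, _, _, _, _ => ⟨[], rfl⟩
  | [e], x, hx, hc, hend, _ =>
    ⟨[⟨e, hc.1 ▸ hx⟩], by simp [parList, show G.rng e ≠ v from hend]⟩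
  | e :: e' :: l, x, hx, hc, hend, hl => by
    have he : G.src e ≠ v := hc.1 ▸ hx
    by_cases hr : G.rng e = v
    · have he' : e' = f := hl e' (by simp) (hc.2.1.trans hr)
      obtain ⟨l', hl'⟩ := exists_parList_eq hwv hf hfr l w hwv (hfr ▸ he' ▸ hc.2.2)
        (hfr ▸ he' ▸ hend) fun e'' he'' => hl e'' (by simp [he''])
      exact ⟨⟨e, he⟩ :: l', by simp [parList, hr, hl', he']⟩
    · obtain ⟨l', hl'⟩ := exists_parList_eq hwv hf hfr (e' :: l) (G.rng e) hr hc.2 hend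
        fun e'' he'' => hl e'' (by simp_all)
      exact ⟨⟨e, he⟩ :: l', by simp [parList, hr, hl']⟩

theorem exists_parPath_eq (hf : G.src f = v) (hfr : G.rng f = w) (b : GPath G)
    (hs : b.src ≠ v) (hr : b.rng ≠ v) (hb : ∀ e ∈ b.edges, G.src e = v → e = f) :
    ∃ p : GPath (ReduceGraph G v w hwv), parPath hf hfr p = b := by
  obtain ⟨l, hl⟩ := exists_parList_eq hwv hf hfr b.edges b.src hs b.comp hr hb
  exact ⟨⟨⟨b.src, hs⟩, l, (composable_parList_iff hf hfr l _).1 (hl ▸ b.comp)⟩,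
    GPath.ext rfl hl⟩

variable {rel : GPath G → GPath G → Prop}

theorem reduceRel_eq_invImage (hf : G.src f = v) (hfr : G.rng f = w) :
    ReduceRel G rel v w hwv f = InvImage rel (parPath hf hfr) := by
  funext p q
  refine propext ⟨fun ⟨p', q', hp₁, hp₂, hq₁, hq₂, h⟩ => ?_,
    fun h => ⟨_, _, rfl, rfl, rfl, rfl, h⟩⟩
  obtain rfl : p' = parPath hf hfr p := GPath.ext hp₁ hp₂
  obtain rfl : q' = parPath hf hfr q := GPath.ext hq₁ hq₂
  exact h

theorem equivalence_reduceRel (h : Equivalence rel) (hf : G.src f = v) (hfr : G.rng f = w) :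
    Equivalence (ReduceRel G rel v w hwv f) :=
  reduceRel_eq_invImage hf hfr ▸ InvImage.equivalence _ _ h

theorem preservesRSD_reduceRel (hK : IsKGraphRel G rel)
    (hsq : IsSquareClosed rel {e : G.E | G.rng e = v}) (hf : G.src f = v) (hfr : G.rng f = w) :
    PreservesRSD (ReduceGraph G v w hwv) (ReduceRel G rel v w hwv f) := by
  rw [reduceRel_eq_invImage hf hfr]
  intro p q hpq
  obtain ⟨hs, hr, -⟩ := hK.2.1 _ _ hpq
  refine ⟨Subtype.ext hs, Subtype.ext ?_, ?_⟩
  · rwa [parPath_rng, parPath_rng] at hr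
  have hvis := hK.visits_eq_of_rel hsq hpq
  have hperm := hK.colors_perm hpq
  rw [parPath_colors, parPath_colors, hvis] at hperm
  have hp := count_false_visits_parPath hf hfr p
  rw [hvis] at hp
  funext i
  exact (perm_of_insertMarked_perm _ hp.symm (count_false_visits_parPath hf hfr q).symm
    hperm).count_eq i

theorem kG0_reduceRel (h : KG0 G rel) (hf : G.src f = v) (hfr : G.rng f = w) :
    KG0 (ReduceGraph G v w hwv) (ReduceRel G rel v w hwv f) := by
  rw [reduceRel_eq_invImage hf hfr]
  intro p₁ p₂ q₁ q₂ hp hq h₁ h₂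
  change rel (parPath hf hfr (p₁.append p₂ hp)) (parPath hf hfr (q₁.append q₂ hq))
  rw [parPath_append, parPath_append]
  exact h _ _ _ _ _ _ h₁ h₂

theorem kG4_reduceRel (hK : IsKGraphRel G rel)
    (hsq : IsSquareClosed rel {e : G.E | G.rng e = v}) (hf : G.src f = v) (hfr : G.rng f = w)
    (hunique : ∀ e, G.src e = v → G.color e = G.color f → e = f) :
    KG4 (ReduceGraph G v w hwv) (ReduceRel G rel v w hwv f) := by
  rw [reduceRel_eq_invImage hf hfr]
  intro P c hc
  set bs := (parPath hf hfr P).visits v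
  have hP := count_false_visits_parPath hf hfr P
  have hlen : c.length = bs.count false := hc.length_eq.trans hP.symm
  have hcolors : ∀ p : GPath (ReduceGraph G v w hwv),
      rel (parPath hf hfr p) (parPath hf hfr P) →
        (parPath hf hfr p).colors = insertMarked (G.color f) bs p.colors := fun p hp => by
    rw [parPath_colors, hK.visits_eq_of_rel hsq hp]
  have hperm : (insertMarked (G.color f) bs c).Perm (parPath hf hfr P).colors := by
    rw [parPath_colors]
    exact ((insertMarked_perm _ _ _ hlen).trans (hc.append_left _)).trans
      (insertMarked_perm _ _ _ hP.symm).symm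
  obtain ⟨b, ⟨hbP, hbc⟩, hb⟩ := hK.2.2.2 _ _ hperm
  have hbvis : b.visits v = bs := hK.visits_eq_of_rel hsq hbP
  obtain ⟨hbs, hbr, -⟩ := hK.2.1 _ _ hbP
  have hbf : ∀ e ∈ b.edges, G.src e = v → e = f := fun e he hev =>
    hunique e hev (eq_of_map_eq_insertMarked G.color _ _ b.edges c (hbvis ▸ hbc) e he
      (decide_eq_true hev))
  obtain ⟨p, rfl⟩ := exists_parPath_eq (hwv := hwv) hf hfr b (hbs ▸ P.src.2)
    (by rw [hbr, parPath_rng]; exact P.rng.2) hbf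
  have hpc : p.colors = c := by
    refine insertMarked_injective (G.color f) ?_ hlen ((hcolors p hbP).symm.trans hbc)
    rw [← hbvis, count_false_visits_parPath]
  refine ⟨p, ⟨hbP, hpc⟩,
    fun q ⟨hqP, hqc⟩ => parPath_injective hf hfr (hb _ ⟨hqP, ?_⟩)⟩
  rw [hcolors q hqP, hqc]

theorem sourceFree_reduceGraph (hsf : SourceFree G) (hout : ∀ e, G.src e = v → G.rng e = w) :
    SourceFree (ReduceGraph G v w hwv) := by
  intro x i
  obtain ⟨e, her, hec⟩ := hsf x.1 i
  by_cases hs : G.src e = v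
  · obtain ⟨g, hgr, hgc⟩ := hsf v i
    have hgs : G.src g ≠ v := fun h => hwv ((hout g h).symm.trans hgr)
    refine ⟨⟨g, hgs⟩, Subtype.ext ?_, hgc⟩
    rw [reduceGraph_rng_val, if_pos hgr, ← her, hout e hs]
  · refine ⟨⟨e, hs⟩, Subtype.ext ?_, hec⟩
    rw [reduceGraph_rng_val, if_neg (her ▸ x.2 : G.rng e ≠ v), her]

theorem rowFinite_reduceGraph (hrf : RowFinite G) : RowFinite (ReduceGraph G v w hwv) := by
  intro x i
  refine Set.Finite.of_finite_image (((hrf x.1 i).union (hrf v i)).subset ?_)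
    Subtype.val_injective.injOn
  rintro _ ⟨e, ⟨hr, hc⟩, rfl⟩
  have hr : (if G.rng e.1 = v then w else G.rng e.1) = x.1 :=
    (reduceGraph_rng_val e).symm.trans (congrArg Subtype.val hr)
  split_ifs at hr with h
  · exact .inr ⟨h, hc⟩
  · exact .inl ⟨hr, hc⟩

end Reduction

/-- Reduction of a row-finite source-free `k`-graph at a vertex `v` whose
incoming and outgoing edge sets are complete edges (and `v ≠ w = r(Λ¹v)`)
yields a row-finite source-free `k`-graph. -/
theorem reduce_is_kgraph {k : ℕ} (G : ColoredGraph k) (rel : GPath G → GPath G → Prop)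
    (hK : IsKGraphRel G rel) (hsf : SourceFree G) (hrf : RowFinite G)
    (v w u : G.V) (hwv : w ≠ v)
    (hout : IsCompleteEdge G rel {e : G.E | G.src e = v} v w)
    (hin : IsCompleteEdge G rel {e : G.E | G.rng e = v} u v)
    (f : G.E) (hf : G.src f = v) :
    IsKGraphRel (ReduceGraph G v w hwv) (ReduceRel G rel v w hwv f) ∧
      SourceFree (ReduceGraph G v w hwv) ∧ RowFinite (ReduceGraph G v w hwv) := by
  have hvw : ∀ e, G.src e = v → G.rng e = w := fun e he => (hout.2.1 e he).2
  have hfr : G.rng f = w := hvw f hf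
  have hunique : ∀ e, G.src e = v → G.color e = G.color f → e = f := by
    obtain ⟨_, _, h⟩ := hout.1 (G.color f)
    exact fun e hs hc => (h e ⟨hs, hc⟩).trans (h f ⟨hf, rfl⟩).symm
  have hsq := hin.isSquareClosed
  exact ⟨⟨equivalence_reduceRel hK.1 hf hfr, preservesRSD_reduceRel hK hsq hf hfr,
      kG0_reduceRel hK.2.2.1 hf hfr, kG4_reduceRel hK hsq hf hfr hunique⟩,
    sourceFree_reduceGraph hsf hvw, rowFinite_reduceGraph hrf⟩

end ColoredGraph
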